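/- arXiv:2007.14430 — 4 statements merged into one kernel-verified Lean document; each statement's English description precedes it below -/
import Mathlib

section
/- Let A be a nonempty finite set and τ > 0. For all q₁, q₂ : A → ℝ, |τ·ln(∑_{a∈A} exp(q₁(a)/τ)) − τ·ln(∑_{a∈A} exp(q₂(a)/τ))| ≤ max_{a∈A} |q₁(a) − q₂(a)|. -/
/-! Bounding `q₁` by `q₂ + M` termwise bounds the sum of exponentials by `exp (M / τ)` times the
other sum, so after the logarithm and the scaling by `τ` the two log-sum-exps differ by at most
`M`; applying this in both directions with `M = maxₐ |q₁ a - q₂ a|` bounds the absolute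
difference. -/

open Finset Real

theorem Real.log_sum_exp_le_log_sum_exp_add {ι : Type*} {s : Finset ι} (hs : s.Nonempty)
    {f g : ι → ℝ} {c : ℝ} (h : ∀ i ∈ s, f i - g i ≤ c) :
    log (∑ i ∈ s, exp (f i)) ≤ log (∑ i ∈ s, exp (g i)) + c := by
  have hg : 0 < ∑ i ∈ s, exp (g i) := sum_pos (fun i _ => exp_pos _) hs
  have hsum : ∑ i ∈ s, exp (f i) ≤ exp c * ∑ i ∈ s, exp (g i) := by
    rw [mul_sum]
    refine sum_le_sum fun i hi => ?_
    rw [← exp_add]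
    exact exp_le_exp.2 (by linarith [h i hi])
  calc log (∑ i ∈ s, exp (f i))
      ≤ log (exp c * ∑ i ∈ s, exp (g i)) := log_le_log (sum_pos (fun i _ => exp_pos _) hs) hsum
    _ = log (∑ i ∈ s, exp (g i)) + c := by
      rw [log_mul (exp_ne_zero _) hg.ne', log_exp, add_comm]

theorem Real.mul_log_sum_exp_div_sub_le {ι : Type*} {s : Finset ι} (hs : s.Nonempty) {τ : ℝ}
    (hτ : 0 < τ) {q₁ q₂ : ι → ℝ} {M : ℝ} (h : ∀ i ∈ s, q₁ i - q₂ i ≤ M) :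
    τ * log (∑ i ∈ s, exp (q₁ i / τ)) - τ * log (∑ i ∈ s, exp (q₂ i / τ)) ≤ M := by
  have hlog := log_sum_exp_le_log_sum_exp_add hs (f := fun i => q₁ i / τ)
    (g := fun i => q₂ i / τ) (c := M / τ) fun i hi => by
      rw [← sub_div]
      exact div_le_div_of_nonneg_right (h i hi) hτ.le
  have hscaled := mul_le_mul_of_nonneg_left hlog hτ.le
  rw [mul_add, mul_div_cancel₀ _ hτ.ne'] at hscaled
  linarith

/-- Nonexpansiveness (in sup norm) of the scaled log-sum-exp: for a nonempty finite set `A`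
and `τ > 0`, for all `q₁ q₂ : A → ℝ`,
`|τ ln ∑ₐ exp(q₁ a / τ) − τ ln ∑ₐ exp(q₂ a / τ)| ≤ maxₐ |q₁ a − q₂ a|`. -/
theorem stmt_1 {A : Type*} [Fintype A] [Nonempty A] (τ : ℝ) (hτ : 0 < τ) (q₁ q₂ : A → ℝ) :
    |τ * Real.log (∑ a, Real.exp (q₁ a / τ)) - τ * Real.log (∑ a, Real.exp (q₂ a / τ))|
      ≤ Finset.univ.sup' Finset.univ_nonempty (fun a => |q₁ a - q₂ a|) := by
  have hM (a : A) (ha : a ∈ univ) := abs_sub_le_iff.1 (le_sup' (fun a => |q₁ a - q₂ a|) ha)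
  exact abs_sub_le_iff.2
    ⟨mul_log_sum_exp_div_sub_le univ_nonempty hτ fun a ha => (hM a ha).1,
      mul_log_sum_exp_div_sub_le univ_nonempty hτ fun a ha => (hM a ha).2⟩
end

section
/- Let S and A be nonempty finite sets, r : S×A → ℝ, γ ∈ (0,1), P a transition kernel, α, τ ∈ ℝ, ε : S×A → ℝ, let π_k, π_{k+1} be full-support policies, and let q_k, q_{k+1} : S×A → ℝ. Set q'_k = q_k − ατ·ln π_k and q'_{k+1} = q_{k+1} − ατ·ln π_{k+1}. Then the identity q_{k+1} = r + ατ·ln π_{k+1} + γ·P⟨π_{k+1}, q_k − τ·ln π_{k+1}⟩ + ε holds if and only if q'_{k+1} = r + γ·P(⟨π_{k+1}, q'_k⟩ − ατ·KL(π_{k+1}‖π_k) + (1−α)·τ·H(π_{k+1})) + ε. -/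
/-!
Since `KL(π₁‖π₂) = ⟨π₁, ln π₁ − ln π₂⟩`, the regularised bootstrap of the second update satisfies
`⟨π, q_k − ατ ln π_k⟩ − ατ KL(π‖π_k) + (1−α)τ H(π) = ⟨π, q_k − τ ln π⟩`, i.e. it equals the
bootstrap of the first one. The two updates then differ only by the term `ατ ln π_{k+1}`, which is
exactly the shift from `q_{k+1}` to `q'_{k+1}`.
-/

open Real

lemma Real.mul_log_div_of_ne_zero (x : ℝ) {y : ℝ} (hy : y ≠ 0) :
    x * log (x / y) = x * log x - x * log y := by
  rcases eq_or_ne x 0 with rfl | hx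
  · simp
  · rw [log_div hx hy, mul_sub]

lemma Finset.sum_mul_sub_log_sub_kl_add_entropy {ι : Type*} [Fintype ι] (p ρ q : ι → ℝ)
    (hρ : ∀ i, ρ i ≠ 0) (α τ : ℝ) :
    (∑ i, p i * (q i - α * τ * log (ρ i)))
        - α * τ * (∑ i, p i * log (p i / ρ i))
        + (1 - α) * τ * (-∑ i, p i * log (p i))
      = ∑ i, p i * (q i - τ * log (p i)) := by
  simp only [Finset.mul_sum, ← Finset.sum_neg_distrib, ← Finset.sum_sub_distrib,
    ← Finset.sum_add_distrib]
  refine Finset.sum_congr rfl fun i _ => ?_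
  rw [mul_log_div_of_ne_zero _ (hρ i)]
  ring

theorem stmt_8_general {S A : Type*} [Fintype S] [Fintype A]
    (r : S × A → ℝ) (γ : ℝ)
    (P : S × A → S → ℝ)
    (α τ : ℝ) (ε : S × A → ℝ)
    (πk πk1 : S → A → ℝ)
    (hπk0 : ∀ s a, 0 < πk s a)
    (qk qk1 : S × A → ℝ)
    (q'k : S × A → ℝ) (hq'k : ∀ s a, q'k (s, a) = qk (s, a) - α * τ * Real.log (πk s a))
    (q'k1 : S × A → ℝ)
    (hq'k1 : ∀ s a, q'k1 (s, a) = qk1 (s, a) - α * τ * Real.log (πk1 s a)) :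
    (∀ s a, qk1 (s, a)
        = r (s, a) + α * τ * Real.log (πk1 s a)
          + γ * ∑ s', P (s, a) s' *
              (∑ a', πk1 s' a' * (qk (s', a') - τ * Real.log (πk1 s' a')))
          + ε (s, a)) ↔
    (∀ s a, q'k1 (s, a)
        = r (s, a)
          + γ * ∑ s', P (s, a) s' *
              ((∑ a', πk1 s' a' * q'k (s', a'))
                - α * τ * (∑ a', πk1 s' a' * Real.log (πk1 s' a' / πk s' a'))
                + (1 - α) * τ * (-∑ a', πk1 s' a' * Real.log (πk1 s' a')))
          + ε (s, a)) := by
  have bootstrap_eq : ∀ s',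
      (∑ a', πk1 s' a' * q'k (s', a'))
          - α * τ * (∑ a', πk1 s' a' * Real.log (πk1 s' a' / πk s' a'))
          + (1 - α) * τ * (-∑ a', πk1 s' a' * Real.log (πk1 s' a'))
        = ∑ a', πk1 s' a' * (qk (s', a') - τ * Real.log (πk1 s' a')) := fun s' => by
    simp only [hq'k]
    exact Finset.sum_mul_sub_log_sub_kl_add_entropy _ _ _ (fun a => (hπk0 s' a).ne') α τ
  refine forall₂_congr fun s a => ?_
  rw [hq'k1]
  simp only [bootstrap_eq]
  constructor <;> intro h <;> linarith

/-- Evaluation-step identity in the proof of Theorem 1: with `q'_k = q_k − ατ ln π_k`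
and `q'_{k+1} = q_{k+1} − ατ ln π_{k+1}`, the Munchausen update
`q_{k+1} = r + ατ ln π_{k+1} + γ P⟨π_{k+1}, q_k − τ ln π_{k+1}⟩ + ε`
holds iff the Mirror-Descent update
`q'_{k+1} = r + γ P(⟨π_{k+1}, q'_k⟩ − ατ KL(π_{k+1}‖π_k) + (1−α)τ H(π_{k+1})) + ε` holds. -/
theorem stmt_8 {S A : Type*} [Fintype S] [Fintype A] [Nonempty S] [Nonempty A]
    (r : S × A → ℝ) (γ : ℝ) (hγ : γ ∈ Set.Ioo (0 : ℝ) 1)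
    (P : S × A → S → ℝ) (hP0 : ∀ sa s', 0 ≤ P sa s') (hP1 : ∀ sa, ∑ s', P sa s' = 1)
    (α τ : ℝ) (ε : S × A → ℝ)
    (πk πk1 : S → A → ℝ)
    (hπk0 : ∀ s a, 0 < πk s a) (hπk1 : ∀ s, ∑ a, πk s a = 1)
    (hπk10 : ∀ s a, 0 < πk1 s a) (hπk11 : ∀ s, ∑ a, πk1 s a = 1)
    (qk qk1 : S × A → ℝ)
    (q'k : S × A → ℝ) (hq'k : ∀ s a, q'k (s, a) = qk (s, a) - α * τ * Real.log (πk s a))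
    (q'k1 : S × A → ℝ)
    (hq'k1 : ∀ s a, q'k1 (s, a) = qk1 (s, a) - α * τ * Real.log (πk1 s a)) :
    (∀ s a, qk1 (s, a)
        = r (s, a) + α * τ * Real.log (πk1 s a)
          + γ * ∑ s', P (s, a) s' *
              (∑ a', πk1 s' a' * (qk (s', a') - τ * Real.log (πk1 s' a')))
          + ε (s, a)) ↔
    (∀ s a, q'k1 (s, a)
        = r (s, a)
          + γ * ∑ s', P (s, a) s' *
              ((∑ a', πk1 s' a' * q'k (s', a'))
                - α * τ * (∑ a', πk1 s' a' * Real.log (πk1 s' a' / πk s' a'))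
                + (1 - α) * τ * (-∑ a', πk1 s' a' * Real.log (πk1 s' a')))
          + ε (s, a)) :=
  stmt_8_general r γ P α τ ε πk πk1 hπk0 qk qk1 q'k hq'k q'k1 hq'k1
end

section
/- (Theorem 1.) Let S and A be nonempty finite sets, r : S×A → ℝ, γ ∈ (0,1), P a transition kernel, τ > 0 and α ∈ [0,1]. Let (π_k, q_k)_{k≥0} be the M-VI(α,τ) sequence started from a full-support policy π₀, an initial q₀, and errors (ε_k)_{k≥1}, and set q'_k = q_k − ατ·ln π_k for all k ≥ 0. Then for every k ≥ 0: (i) for each s ∈ S, π_{k+1}(s) is the unique maximizer over probability vectors π on A of π ↦ ∑_a π(a)·q'_k(s,a) − ατ·KL(π‖π_k(s)) + (1−α)·τ·H(π); and (ii) q'_{k+1} = r + γ·P(⟨π_{k+1}, q'_k⟩ − ατ·KL(π_{k+1}‖π_k) + (1−α)·τ·H(π_{k+1})) + ε_{k+1}. In other words, M-VI(α,τ) produces exactly the iterates of Mirror Descent Value Iteration MD-VI(ατ, (1−α)τ) started from π₀ and q'₀. -/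
/-! The Munchausen bonus `ατ ln π_k` hidden in `q'_k` cancels the cross-entropy part of
`KL(p‖π_k) = ∑ p ln p − ∑ p ln π_k`, so the MD-VI objective collapses to the soft value
`⟨p, q_k − τ ln p⟩`. By the Gibbs variational principle,
`⟨p, Q − τ ln p⟩ = τ ln ∑ exp (Q/τ) − τ KL(p‖softmax (Q/τ))`, which is maximal exactly at
`p = softmax (q_k/τ) = π_{k+1}`; the same collapse at `p = π_{k+1}` turns the M-VI update of `q`
into the MD-VI update of `q'`. -/

open Finset InformationTheory

section Divergence

open Real

variable {A : Type*} [Fintype A]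

lemma sum_mul_sub_const_mul (p f g : A → ℝ) (c : ℝ) :
    ∑ a, p a * (f a - c * g a) = ∑ a, p a * f a - c * ∑ a, p a * g a := by
  rw [mul_sum, ← sum_sub_distrib]
  exact sum_congr rfl fun a _ => by ring

lemma mul_log_div_eq_sub {p σ : ℝ} (hσ : σ ≠ 0) :
    p * log (p / σ) = p * log p - p * log σ := by
  rcases eq_or_ne p 0 with rfl | hp
  · simp
  · rw [log_div hp hσ]
    ring

lemma mul_log_div_eq_mul_klFun_add {p σ : ℝ} (hσ : σ ≠ 0) :
    p * log (p / σ) = σ * klFun (p / σ) + (p - σ) := by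
  rw [klFun_apply]
  field_simp
  ring

lemma sum_mul_log_div_eq_sum_mul_klFun {p σ : A → ℝ} (hσ : ∀ a, σ a ≠ 0)
    (hsum : ∑ a, p a = ∑ a, σ a) :
    ∑ a, p a * log (p a / σ a) = ∑ a, σ a * klFun (p a / σ a) := by
  simp only [mul_log_div_eq_mul_klFun_add (hσ _), sum_add_distrib, sum_sub_distrib, hsum,
    sub_self, add_zero]

theorem sum_mul_log_div_nonneg {p σ : A → ℝ} (hp : ∀ a, 0 ≤ p a) (hσ : ∀ a, 0 < σ a)
    (hsum : ∑ a, p a = ∑ a, σ a) :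
    0 ≤ ∑ a, p a * log (p a / σ a) := by
  rw [sum_mul_log_div_eq_sum_mul_klFun (fun a => (hσ a).ne') hsum]
  exact sum_nonneg fun a _ => mul_nonneg (hσ a).le (klFun_nonneg (div_nonneg (hp a) (hσ a).le))

theorem eq_of_sum_mul_log_div_eq_zero {p σ : A → ℝ} (hp : ∀ a, 0 ≤ p a) (hσ : ∀ a, 0 < σ a)
    (hsum : ∑ a, p a = ∑ a, σ a) (hzero : ∑ a, p a * log (p a / σ a) = 0) :
    p = σ := by
  have hnonneg a : 0 ≤ p a / σ a := div_nonneg (hp a) (hσ a).le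
  rw [sum_mul_log_div_eq_sum_mul_klFun (fun a => (hσ a).ne') hsum,
    sum_eq_zero_iff_of_nonneg fun a _ => mul_nonneg (hσ a).le (klFun_nonneg (hnonneg a))] at hzero
  funext a
  have hkl : klFun (p a / σ a) = 0 :=
    (mul_eq_zero.mp (hzero a (mem_univ a))).resolve_left (hσ a).ne'
  exact (div_eq_one_iff_eq (hσ a).ne').mp ((klFun_eq_zero_iff (hnonneg a)).mp hkl)

end Divergence

section Softmax

open Real

variable {A : Type*} [Fintype A] [Nonempty A]

noncomputable def softmax (Q : A → ℝ) : A → ℝ :=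
  fun a => exp (Q a) / ∑ a', exp (Q a')

lemma sum_exp_pos (Q : A → ℝ) : 0 < ∑ a, exp (Q a) :=
  sum_pos (fun a _ => exp_pos (Q a)) univ_nonempty

lemma softmax_pos (Q : A → ℝ) (a : A) : 0 < softmax Q a :=
  div_pos (exp_pos _) (sum_exp_pos Q)

lemma sum_softmax (Q : A → ℝ) : ∑ a, softmax Q a = 1 := by
  simp only [softmax, ← sum_div]
  exact div_self (sum_exp_pos Q).ne'

lemma log_softmax (Q : A → ℝ) (a : A) :
    log (softmax Q a) = Q a - log (∑ a', exp (Q a')) := by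
  rw [softmax, log_div (exp_pos _).ne' (sum_exp_pos Q).ne', log_exp]

lemma sum_mul_sub_mul_log_eq {τ : ℝ} (hτ : τ ≠ 0) (Q p : A → ℝ) (hp : ∑ a, p a = 1) :
    ∑ a, p a * (Q a - τ * log (p a))
      = τ * log (∑ a, exp (Q a / τ))
        - τ * ∑ a, p a * log (p a / softmax (fun a => Q a / τ) a) := by
  have hlog a : p a * log (p a / softmax (fun a => Q a / τ) a)
      = p a * log (p a) - p a * Q a / τ + p a * log (∑ a, exp (Q a / τ)) := by
    rw [mul_log_div_eq_sub (softmax_pos _ a).ne', log_softmax]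
    ring
  simp only [sum_mul_sub_const_mul, hlog, sum_add_distrib, sum_sub_distrib, ← sum_mul, ← sum_div,
    hp]
  field_simp
  ring

lemma soft_value_softmax {τ : ℝ} (hτ : τ ≠ 0) (Q : A → ℝ) :
    ∑ a, softmax (fun a => Q a / τ) a * (Q a - τ * log (softmax (fun a => Q a / τ) a))
      = τ * log (∑ a, exp (Q a / τ)) := by
  rw [sum_mul_sub_mul_log_eq hτ Q _ (sum_softmax _)]
  simp only [div_self (softmax_pos _ _).ne', log_one, mul_zero, sum_const_zero, sub_zero]

theorem soft_value_le_softmax {τ : ℝ} (hτ : 0 < τ) (Q p : A → ℝ) (hp0 : ∀ a, 0 ≤ p a)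
    (hp1 : ∑ a, p a = 1) :
    ∑ a, p a * (Q a - τ * log (p a))
      ≤ ∑ a, softmax (fun a => Q a / τ) a * (Q a - τ * log (softmax (fun a => Q a / τ) a)) := by
  have hkl := sum_mul_log_div_nonneg (σ := softmax fun a => Q a / τ) hp0 (softmax_pos _)
    (by rw [hp1, sum_softmax])
  rw [sum_mul_sub_mul_log_eq hτ.ne' Q p hp1, soft_value_softmax hτ.ne']
  linarith [mul_nonneg hτ.le hkl]

theorem eq_softmax_of_soft_value_eq {τ : ℝ} (hτ : 0 < τ) (Q p : A → ℝ) (hp0 : ∀ a, 0 ≤ p a)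
    (hp1 : ∑ a, p a = 1)
    (heq : ∑ a, p a * (Q a - τ * log (p a))
      = ∑ a, softmax (fun a => Q a / τ) a * (Q a - τ * log (softmax (fun a => Q a / τ) a))) :
    p = softmax (fun a => Q a / τ) := by
  rw [sum_mul_sub_mul_log_eq hτ.ne' Q p hp1, soft_value_softmax hτ.ne'] at heq
  refine eq_of_sum_mul_log_div_eq_zero hp0 (softmax_pos _) (by rw [hp1, sum_softmax]) ?_
  have hτkl : τ * ∑ a, p a * log (p a / softmax (fun a => Q a / τ) a) = 0 := by linarith
  exact (mul_eq_zero.mp hτkl).resolve_left hτ.ne'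

end Softmax

open Real in
lemma munchausen_objective_eq {A : Type*} [Fintype A] (p σ Q : A → ℝ) (α τ : ℝ)
    (hσ : ∀ a, σ a ≠ 0) :
    (∑ a, p a * (Q a - α * τ * log (σ a)))
        - α * τ * (∑ a, p a * log (p a / σ a))
        + (1 - α) * τ * (-∑ a, p a * log (p a))
      = ∑ a, p a * (Q a - τ * log (p a)) := by
  simp only [sum_mul_sub_const_mul, mul_log_div_eq_sub (hσ _), sum_sub_distrib]
  ring

theorem stmt_9_general {S A : Type*} [Fintype S] [Fintype A] [Nonempty A]
    (r : S × A → ℝ) (γ : ℝ)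
    (P : S × A → S → ℝ)
    (τ : ℝ) (hτ : 0 < τ) (α : ℝ)
    (π : ℕ → S → A → ℝ) (q : ℕ → S × A → ℝ) (ε : ℕ → S × A → ℝ)
    (hπ00 : ∀ s a, 0 < π 0 s a)
    (hπ : ∀ k s a, π (k + 1) s a
      = Real.exp (q k (s, a) / τ) / ∑ a', Real.exp (q k (s, a') / τ))
    (hq : ∀ k s a, q (k + 1) (s, a)
      = r (s, a) + α * τ * Real.log (π (k + 1) s a)
        + γ * ∑ s', P (s, a) s' *
            (∑ a', π (k + 1) s' a' * (q k (s', a') - τ * Real.log (π (k + 1) s' a')))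
        + ε (k + 1) (s, a))
    (q' : ℕ → S × A → ℝ)
    (hq' : ∀ k s a, q' k (s, a) = q k (s, a) - α * τ * Real.log (π k s a)) :
    ∀ k : ℕ,
      (∀ s : S, ∀ p : A → ℝ, (∀ a, 0 ≤ p a) → (∑ a, p a = 1) →
        ((∑ a, p a * q' k (s, a))
            - α * τ * (∑ a, p a * Real.log (p a / π k s a))
            + (1 - α) * τ * (-∑ a, p a * Real.log (p a))
          ≤ (∑ a, π (k + 1) s a * q' k (s, a))
            - α * τ * (∑ a, π (k + 1) s a * Real.log (π (k + 1) s a / π k s a))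
            + (1 - α) * τ * (-∑ a, π (k + 1) s a * Real.log (π (k + 1) s a))) ∧
        ((∑ a, p a * q' k (s, a))
            - α * τ * (∑ a, p a * Real.log (p a / π k s a))
            + (1 - α) * τ * (-∑ a, p a * Real.log (p a))
          = (∑ a, π (k + 1) s a * q' k (s, a))
            - α * τ * (∑ a, π (k + 1) s a * Real.log (π (k + 1) s a / π k s a))
            + (1 - α) * τ * (-∑ a, π (k + 1) s a * Real.log (π (k + 1) s a))
          → p = π (k + 1) s)) ∧
      (∀ s a, q' (k + 1) (s, a)
        = r (s, a)
          + γ * ∑ s', P (s, a) s' *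
              ((∑ a', π (k + 1) s' a' * q' k (s', a'))
                - α * τ * (∑ a', π (k + 1) s' a' * Real.log (π (k + 1) s' a' / π k s' a'))
                + (1 - α) * τ * (-∑ a', π (k + 1) s' a' * Real.log (π (k + 1) s' a')))
          + ε (k + 1) (s, a)) := by
  have hsoftmax k s : π (k + 1) s = softmax (fun a => q k (s, a) / τ) := funext (hπ k s)
  have hne : ∀ k s a, π k s a ≠ 0 := by
    rintro (_ | k) s a
    · exact (hπ00 s a).ne'
    · rw [hsoftmax]
      exact (softmax_pos _ a).ne'
  have hobjective k s (p : A → ℝ) :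
      (∑ a, p a * q' k (s, a))
          - α * τ * (∑ a, p a * Real.log (p a / π k s a))
          + (1 - α) * τ * (-∑ a, p a * Real.log (p a))
        = ∑ a, p a * (q k (s, a) - τ * Real.log (p a)) := by
    simp only [hq']
    exact munchausen_objective_eq p (π k s) (fun a => q k (s, a)) α τ (hne k s)
  intro k
  refine ⟨fun s p hp0 hp1 => ?_, fun s a => ?_⟩
  · rw [hobjective, hobjective, hsoftmax]
    exact ⟨soft_value_le_softmax hτ _ p hp0 hp1, eq_softmax_of_soft_value_eq hτ _ p hp0 hp1⟩
  · simp only [hobjective]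
    rw [hq', hq]
    ring

/-- Theorem 1: the Munchausen Value Iteration sequence M-VI(α,τ), given by
`π_{k+1} = softmax(q_k/τ)` and
`q_{k+1} = r + ατ ln π_{k+1} + γ P⟨π_{k+1}, q_k − τ ln π_{k+1}⟩ + ε_{k+1}`,
is, in terms of `q'_k = q_k − ατ ln π_k`, exactly Mirror Descent Value Iteration
MD-VI(ατ, (1−α)τ): (i) for each `s`, `π_{k+1}(s)` is the unique maximizer over the simplex
of `π ↦ ⟨π, q'_k(s,·)⟩ − ατ KL(π‖π_k(s)) + (1−α)τ H(π)`, and (ii)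
`q'_{k+1} = r + γ P(⟨π_{k+1}, q'_k⟩ − ατ KL(π_{k+1}‖π_k) + (1−α)τ H(π_{k+1})) + ε_{k+1}`. -/
theorem stmt_9 {S A : Type*} [Fintype S] [Fintype A] [Nonempty S] [Nonempty A]
    (r : S × A → ℝ) (γ : ℝ) (hγ : γ ∈ Set.Ioo (0 : ℝ) 1)
    (P : S × A → S → ℝ) (hP0 : ∀ sa s', 0 ≤ P sa s') (hP1 : ∀ sa, ∑ s', P sa s' = 1)
    (τ : ℝ) (hτ : 0 < τ) (α : ℝ) (hα : α ∈ Set.Icc (0 : ℝ) 1)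
    (π : ℕ → S → A → ℝ) (q : ℕ → S × A → ℝ) (ε : ℕ → S × A → ℝ)
    (hπ00 : ∀ s a, 0 < π 0 s a) (hπ01 : ∀ s, ∑ a, π 0 s a = 1)
    (hπ : ∀ k s a, π (k + 1) s a
      = Real.exp (q k (s, a) / τ) / ∑ a', Real.exp (q k (s, a') / τ))
    (hq : ∀ k s a, q (k + 1) (s, a)
      = r (s, a) + α * τ * Real.log (π (k + 1) s a)
        + γ * ∑ s', P (s, a) s' *
            (∑ a', π (k + 1) s' a' * (q k (s', a') - τ * Real.log (π (k + 1) s' a')))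
        + ε (k + 1) (s, a))
    (q' : ℕ → S × A → ℝ)
    (hq' : ∀ k s a, q' k (s, a) = q k (s, a) - α * τ * Real.log (π k s a)) :
    ∀ k : ℕ,
      (∀ s : S, ∀ p : A → ℝ, (∀ a, 0 ≤ p a) → (∑ a, p a = 1) →
        ((∑ a, p a * q' k (s, a))
            - α * τ * (∑ a, p a * Real.log (p a / π k s a))
            + (1 - α) * τ * (-∑ a, p a * Real.log (p a))
          ≤ (∑ a, π (k + 1) s a * q' k (s, a))
            - α * τ * (∑ a, π (k + 1) s a * Real.log (π (k + 1) s a / π k s a))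
            + (1 - α) * τ * (-∑ a, π (k + 1) s a * Real.log (π (k + 1) s a))) ∧
        ((∑ a, p a * q' k (s, a))
            - α * τ * (∑ a, p a * Real.log (p a / π k s a))
            + (1 - α) * τ * (-∑ a, p a * Real.log (p a))
          = (∑ a, π (k + 1) s a * q' k (s, a))
            - α * τ * (∑ a, π (k + 1) s a * Real.log (π (k + 1) s a / π k s a))
            + (1 - α) * τ * (-∑ a, π (k + 1) s a * Real.log (π (k + 1) s a))
          → p = π (k + 1) s)) ∧
      (∀ s a, q' (k + 1) (s, a)
        = r (s, a)
          + γ * ∑ s', P (s, a) s' *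
              ((∑ a', π (k + 1) s' a' * q' k (s', a'))
                - α * τ * (∑ a', π (k + 1) s' a' * Real.log (π (k + 1) s' a' / π k s' a'))
                + (1 - α) * τ * (-∑ a', π (k + 1) s' a' * Real.log (π (k + 1) s' a')))
          + ε (k + 1) (s, a)) :=
  stmt_9_general r γ P τ hτ α π q ε hπ00 hπ hq q' hq'
end

section
/- (Corollary 1.) Let S and A be nonempty finite sets, r : S×A → ℝ with |r(s,a)| ≤ r_max for all (s,a), γ ∈ (0,1), P a transition kernel, τ > 0 and k ≥ 1. Let (π_j, q_j)_{j≥0} be the M-VI(1,τ) sequence with errors (ε_j)_{j≥1}, started from the uniform policy π₀(s)(a) = 1/|A| and from q₀ with ‖q₀ − τ·ln π₀‖∞ ≤ r_max/(1−γ), and assume ‖q_j − τ·ln π_j‖∞ ≤ r_max/(1−γ) for all 1 ≤ j ≤ k. Let q_* be the unique fixed point of the Bellman optimality operator, π_* any deterministic policy greedy with respect to q_* (π_*(s) puts probability 1 on a maximizer of q_*(s,·)), and q_{π_k} the unique fixed point of T_{π_k}. Define E_k = −∑_{j=1}^k ε_j and the matrix A¹_k = (I − γP_{π_*})⁻¹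 − (I − γP_{π_k})⁻¹ acting on functions S×A → ℝ. Then, componentwise on S×A: 0 ≤ q_* − q_{π_k} ≤ |A¹_k (E_k/k)| + (4/(1−γ)²)·((r_max + τ·ln|A|)/k)·𝟏. -/
/-!
Put `h_j = q_j - τ ln π_j` and `H_j = h_0 + ⋯ + h_{j-1}`. For `α = 1`, M-VI is dual averaging,
`π_j = softmax(H_j / τ)`, and the soft values `w_j = τ ln ∑_a exp(H_j(·, a) / τ)` telescope:
`H_k = h_0 - h_k + k r + γ P (w_k - τ ln|A|) - E_k`. Hence for every policy `p` with
`q_p = T_p q_p`,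
  `(I - γ P_p)(k q_p - H_k) = E_k + h_k - h_0 + γ P (⟨p, H_k⟩ - w_k + τ ln|A|)`,
where the last bracket is at most `τ ln|A|` because `w_k` dominates every average of `H_k`, and is
nonnegative for `p = π_k` because the entropy of `π_k` is at most `ln|A|`. The resolvent
`(I - γ P_p)⁻¹` is monotone and maps `𝟏` to `𝟏/(1-γ)`; applying it with `p = π_*` and `p = π_k`
and subtracting gives the bound, with `|h_j| ≤ r_max/(1-γ)` controlling `h_k - h_0`.
-/

open Matrix Finset

namespace Matrix

variable {n : Type*} [Fintype n] [DecidableEq n] {B : Matrix n n ℝ} {γ : ℝ}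

/- Minimum principle: at a minimiser `i₀` of `z`, `z i₀ ≤ (B z) i₀`. -/
theorem nonneg_of_one_sub_smul_mulVec_nonneg (hB : B ∈ rowStochastic ℝ n) (hγ0 : 0 ≤ γ)
    (hγ1 : γ < 1) {z : n → ℝ} (hz : 0 ≤ (1 - γ • B) *ᵥ z) : 0 ≤ z := by
  intro i
  obtain ⟨i₀, -, hmin⟩ := exists_min_image univ z ⟨i, mem_univ i⟩
  have hmean : z i₀ ≤ (B *ᵥ z) i₀ := calc
    z i₀ = ∑ j, B i₀ j * z i₀ := by rw [← sum_mul, sum_row_of_mem_rowStochastic hB, one_mul]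
    _ ≤ ∑ j, B i₀ j * z j := sum_le_sum fun j _ =>
      mul_le_mul_of_nonneg_left (hmin j (mem_univ j)) (nonneg_of_mem_rowStochastic hB)
  have hz₀ : 0 ≤ z i₀ - γ * (B *ᵥ z) i₀ := by
    simpa [sub_mulVec, smul_mulVec] using hz i₀
  have hz_min : 0 ≤ z i₀ := by nlinarith
  exact hz_min.trans (hmin i (mem_univ i))

theorem isUnit_det_one_sub_smul (hB : B ∈ rowStochastic ℝ n) (hγ0 : 0 ≤ γ) (hγ1 : γ < 1) :
    IsUnit (1 - γ • B).det := by
  rw [isUnit_iff_ne_zero]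
  intro hdet
  obtain ⟨v, hv, hMv⟩ := exists_mulVec_eq_zero_iff.mpr hdet
  have hpos : 0 ≤ v := nonneg_of_one_sub_smul_mulVec_nonneg hB hγ0 hγ1 hMv.ge
  have hneg : 0 ≤ -v :=
    nonneg_of_one_sub_smul_mulVec_nonneg hB hγ0 hγ1 (by rw [mulVec_neg, hMv, neg_zero])
  exact hv (le_antisymm (neg_nonneg.mp hneg) hpos)

theorem inv_one_sub_smul_mulVec_mono (hB : B ∈ rowStochastic ℝ n) (hγ0 : 0 ≤ γ) (hγ1 : γ < 1)
    {c d : n → ℝ} (h : c ≤ d) : (1 - γ • B)⁻¹ *ᵥ c ≤ (1 - γ • B)⁻¹ *ᵥ d := by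
  rw [← sub_nonneg, ← mulVec_sub]
  refine nonneg_of_one_sub_smul_mulVec_nonneg hB hγ0 hγ1 ?_
  rwa [mulVec_mulVec, mul_nonsing_inv _ (isUnit_det_one_sub_smul hB hγ0 hγ1), one_mulVec,
    sub_nonneg]

theorem inv_one_sub_smul_mulVec_cancel (hB : B ∈ rowStochastic ℝ n) (hγ0 : 0 ≤ γ) (hγ1 : γ < 1)
    (z : n → ℝ) : (1 - γ • B)⁻¹ *ᵥ ((1 - γ • B) *ᵥ z) = z := by
  rw [mulVec_mulVec, nonsing_inv_mul _ (isUnit_det_one_sub_smul hB hγ0 hγ1), one_mulVec]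

theorem le_inv_one_sub_smul_mulVec (hB : B ∈ rowStochastic ℝ n) (hγ0 : 0 ≤ γ) (hγ1 : γ < 1)
    {z c : n → ℝ} (h : (1 - γ • B) *ᵥ z ≤ c) : z ≤ (1 - γ • B)⁻¹ *ᵥ c := by
  simpa only [inv_one_sub_smul_mulVec_cancel hB hγ0 hγ1] using
    inv_one_sub_smul_mulVec_mono hB hγ0 hγ1 h

theorem inv_one_sub_smul_mulVec_le (hB : B ∈ rowStochastic ℝ n) (hγ0 : 0 ≤ γ) (hγ1 : γ < 1)
    {z c : n → ℝ} (h : c ≤ (1 - γ • B) *ᵥ z) : (1 - γ • B)⁻¹ *ᵥ c ≤ z := by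
  simpa only [inv_one_sub_smul_mulVec_cancel hB hγ0 hγ1] using
    inv_one_sub_smul_mulVec_mono hB hγ0 hγ1 h

theorem inv_one_sub_smul_mulVec_const (hB : B ∈ rowStochastic ℝ n) (hγ0 : 0 ≤ γ) (hγ1 : γ < 1)
    (C : ℝ) : (1 - γ • B)⁻¹ *ᵥ (fun _ => C) = fun _ => C / (1 - γ) := by
  have h : (1 - γ • B) *ᵥ (fun _ => C / (1 - γ)) = fun _ => C := by
    ext i
    have hB1 : (B *ᵥ fun _ => C / (1 - γ)) i = C / (1 - γ) := by
      simp [mulVec, dotProduct, ← sum_mul, sum_row_of_mem_rowStochastic hB]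
    simp only [sub_mulVec, one_mulVec, smul_mulVec, Pi.sub_apply, Pi.smul_apply, smul_eq_mul, hB1]
    field_simp [(sub_pos.mpr hγ1).ne']
  rw [← h, inv_one_sub_smul_mulVec_cancel hB hγ0 hγ1]

theorem abs_inv_one_sub_smul_mulVec_le (hB : B ∈ rowStochastic ℝ n) (hγ0 : 0 ≤ γ) (hγ1 : γ < 1)
    {c : n → ℝ} {C : ℝ} (hc : ∀ i, |c i| ≤ C) (i : n) :
    |((1 - γ • B)⁻¹ *ᵥ c) i| ≤ C / (1 - γ) := by
  have hlo := inv_one_sub_smul_mulVec_mono hB hγ0 hγ1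
    (show (fun _ => -C) ≤ c from fun j => neg_le_of_abs_le (hc j)) i
  have hhi := inv_one_sub_smul_mulVec_mono hB hγ0 hγ1
    (show c ≤ fun _ => C from fun j => le_of_abs_le (hc j)) i
  rw [inv_one_sub_smul_mulVec_const hB hγ0 hγ1] at hlo hhi
  rw [abs_le, ← neg_div]
  exact ⟨hlo, hhi⟩

end Matrix

section Simplex

open Real

variable {ι : Type*} [Fintype ι]

theorem dotProduct_le_of_mem_stdSimplex {w v : ι → ℝ} {c : ℝ} (hw : w ∈ stdSimplex ℝ ι)
    (hv : ∀ i, v i ≤ c) : w ⬝ᵥ v ≤ c := calc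
  w ⬝ᵥ v ≤ ∑ i, w i * c := sum_le_sum fun i _ => mul_le_mul_of_nonneg_left (hv i) (hw.1 i)
  _ = c := by rw [← sum_mul, hw.2, one_mul]

theorem le_dotProduct_of_mem_stdSimplex {w v : ι → ℝ} {c : ℝ} (hw : w ∈ stdSimplex ℝ ι)
    (hv : ∀ i, c ≤ v i) : c ≤ w ⬝ᵥ v := by
  simpa using dotProduct_le_of_mem_stdSimplex (v := -v) hw (fun i => neg_le_neg (hv i))

theorem neg_log_card_le_sum_mul_log {p : ι → ℝ} (hp : p ∈ stdSimplex ℝ ι) :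
    -log (Fintype.card ι) ≤ ∑ i, p i * log (p i) := by
  set N : ℝ := (Fintype.card ι : ℝ)
  have hN : 0 < N := Nat.cast_pos.mpr <| Finset.card_pos.mpr <|
    nonempty_of_sum_ne_zero (hp.2.symm ▸ one_ne_zero)
  have hsplit : ∀ i, p i * log (N * p i) = p i * log N + p i * log (p i) := by
    intro i
    rcases (hp.1 i).eq_or_lt with h | h
    · simp [← h]
    · rw [log_mul hN.ne' h.ne', mul_add]
  have key := sum_le_sum fun i (_ : i ∈ univ) => self_sub_one_le_mul_log (mul_nonneg hN.le (hp.1 i))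
  simp only [mul_assoc, hsplit, sum_sub_distrib, ← mul_sum, sum_add_distrib, ← sum_mul, hp.2,
    sum_const, card_univ, nsmul_eq_mul] at key
  nlinarith

end Simplex

namespace MDP

section Policy

variable {S A : Type*} [Fintype A]

def policyAvg (p : S → A → ℝ) (z : S × A → ℝ) : S → ℝ := fun s => p s ⬝ᵥ fun a => z (s, a)

theorem policyAvg_le {p : S → A → ℝ} {z : S × A → ℝ} {v : S → ℝ} (hp : ∀ s, p s ∈ stdSimplex ℝ A)
    (hz : ∀ s a, z (s, a) ≤ v s) : policyAvg p z ≤ v :=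
  fun s => dotProduct_le_of_mem_stdSimplex (hp s) (hz s)

theorem le_policyAvg {p : S → A → ℝ} {z : S × A → ℝ} {v : S → ℝ} (hp : ∀ s, p s ∈ stdSimplex ℝ A)
    (hz : ∀ s a, v s ≤ z (s, a)) : v ≤ policyAvg p z :=
  fun s => le_dotProduct_of_mem_stdSimplex (hp s) (hz s)

theorem policyAvg_comp_fst {p : S → A → ℝ} (hp : ∀ s, p s ∈ stdSimplex ℝ A) (v : S → ℝ) :
    policyAvg p (fun x => v x.1) = v :=
  le_antisymm (policyAvg_le hp fun _ _ => le_rfl) (le_policyAvg hp fun _ _ => le_rfl)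

theorem policyAvg_single_eq_sup' [DecidableEq A] [Nonempty A] {p : S → A → ℝ} {z : S × A → ℝ} {a : S → A}
    (hp : ∀ s, p s = Pi.single (a s) 1) (hz : ∀ s a', z (s, a') ≤ z (s, a s)) (s : S) :
    policyAvg p z s = univ.sup' univ_nonempty fun a' => z (s, a') := by
  rw [policyAvg, hp, single_one_dotProduct]
  exact le_antisymm (le_sup' (fun a' => z (s, a')) (mem_univ _)) (sup'_le _ _ fun a' _ => hz s a')

variable [Fintype S] [DecidableEq S] [DecidableEq A] {P : Matrix (S × A) S ℝ}

variable (P) in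
def policyMatrix (p : S → A → ℝ) : Matrix (S × A) (S × A) ℝ := fun x y => P x y.1 * p y.1 y.2

theorem policyMatrix_mem_rowStochastic (hP : ∀ x, P x ∈ stdSimplex ℝ S) {p : S → A → ℝ}
    (hp : ∀ s, p s ∈ stdSimplex ℝ A) : policyMatrix P p ∈ rowStochastic ℝ (S × A) := by
  refine mem_rowStochastic_iff_sum.mpr
    ⟨fun x y => mul_nonneg ((hP x).1 _) ((hp _).1 _), fun x => ?_⟩
  simp only [policyMatrix, Fintype.sum_prod_type, ← mul_sum, (hp _).2, mul_one, (hP x).2]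

theorem one_sub_smul_policyMatrix_mulVec (γ : ℝ) (p : S → A → ℝ) (z : S × A → ℝ) :
    (1 - γ • policyMatrix P p) *ᵥ z = z - γ • P *ᵥ policyAvg p z := by
  have hmul : policyMatrix P p *ᵥ z = P *ᵥ policyAvg p z := by
    ext x
    simp only [mulVec, dotProduct, policyMatrix, policyAvg, Fintype.sum_prod_type, mul_sum,
      mul_assoc]
  rw [sub_mulVec, one_mulVec, smul_mulVec, hmul]

theorem qfun_le_of_le_bellman_max (hP : ∀ x, P x ∈ stdSimplex ℝ S) {γ : ℝ} (hγ0 : 0 ≤ γ)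
    (hγ1 : γ < 1) {p : S → A → ℝ} (hp : ∀ s, p s ∈ stdSimplex ℝ A) {r q q' : S × A → ℝ}
    {v : S → ℝ} (hq : q = r + γ • P *ᵥ policyAvg p q) (hq' : q' = r + γ • P *ᵥ v)
    (hv : ∀ s a, q' (s, a) ≤ v s) : q ≤ q' := by
  have hgap : (1 - γ • policyMatrix P p) *ᵥ (q' - q) = γ • P *ᵥ (v - policyAvg p q') := by
    rw [mulVec_sub, one_sub_smul_policyMatrix_mulVec, one_sub_smul_policyMatrix_mulVec,
      sub_eq_of_eq_add hq, mulVec_sub, smul_sub, ← sub_eq_of_eq_add' hq']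
    abel
  have hpv := policyAvg_le hp hv
  rw [← sub_nonneg]
  refine nonneg_of_one_sub_smul_mulVec_nonneg (policyMatrix_mem_rowStochastic hP hp) hγ0 hγ1 ?_
  rw [hgap]
  exact smul_nonneg hγ0 fun x =>
    le_dotProduct_of_mem_stdSimplex (hP x) fun s => sub_nonneg.mpr (hpv s)

end Policy

section Softmax

open Real

variable {S A : Type*} [Fintype A] (τ : ℝ) (f : S × A → ℝ)

noncomputable def softmax : S → A → ℝ := fun s a => exp (f (s, a) / τ) / ∑ a', exp (f (s, a') / τ)

noncomputable def softValue : S → ℝ := fun s => τ * log (∑ a, exp (f (s, a) / τ))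

variable {τ f}

theorem softmax_zero (s : S) (a : A) : softmax τ 0 s a = 1 / Fintype.card A := by
  simp [softmax]

theorem softValue_zero (s : S) : softValue τ (0 : S × A → ℝ) s = τ * log (Fintype.card A) := by
  simp [softValue]

theorem softmax_sub_comp_fst (c : S → ℝ) : softmax τ (fun x => f x - c x.1) = softmax τ f := by
  ext s a
  simp only [softmax, sub_div, exp_sub, ← sum_div]
  rw [div_div_div_cancel_right₀ (exp_ne_zero _)]

variable [Nonempty A]

theorem sum_exp_div_pos (s : S) : 0 < ∑ a, exp (f (s, a) / τ) :=
  sum_pos (fun _ _ => exp_pos _) univ_nonempty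

theorem softmax_mem_stdSimplex (s : S) : softmax τ f s ∈ stdSimplex ℝ A := by
  refine ⟨fun a => (div_pos (exp_pos _) (sum_exp_div_pos s)).le, ?_⟩
  simp only [softmax, ← sum_div]
  exact div_self (sum_exp_div_pos s).ne'

theorem mul_log_softmax (hτ : τ ≠ 0) (s : S) (a : A) :
    τ * log (softmax τ f s a) = f (s, a) - softValue τ f s := by
  rw [softmax, log_div (exp_ne_zero _) (sum_exp_div_pos s).ne', log_exp, softValue, mul_sub,
    mul_div_cancel₀ _ hτ]

theorem le_softValue (hτ : 0 < τ) (s : S) (a : A) : f (s, a) ≤ softValue τ f s := by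
  obtain ⟨h0, h1⟩ := mem_Icc_of_mem_stdSimplex (softmax_mem_stdSimplex s) a
  have := mul_nonpos_of_nonneg_of_nonpos hτ.le (log_nonpos h0 h1)
  linarith [mul_log_softmax hτ.ne' s a (f := f)]

theorem softValue_le_policyAvg_softmax (hτ : 0 < τ) (s : S) :
    softValue τ f s ≤ policyAvg (softmax τ f) f s + τ * log (Fintype.card A) := by
  have hf : ∀ a, f (s, a) = τ * log (softmax τ f s a) + softValue τ f s := fun a => by
    rw [mul_log_softmax hτ.ne']; ring
  have hent := mul_le_mul_of_nonneg_left
    (neg_log_card_le_sum_mul_log (softmax_mem_stdSimplex s (f := f) (τ := τ))) hτ.le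
  have havg : policyAvg (softmax τ f) f s
      = τ * ∑ a, softmax τ f s a * log (softmax τ f s a) + softValue τ f s := by
    simp only [policyAvg, dotProduct, hf, mul_add, sum_add_distrib, ← sum_mul,
      (softmax_mem_stdSimplex s).2, one_mul, mul_sum]
    congr 1
    exact sum_congr rfl fun a _ => by ring
  linarith

end Softmax

section MVI

variable {S A : Type*}

noncomputable def logPolicy (p : S → A → ℝ) : S × A → ℝ := fun x => Real.log (p x.1 x.2)

noncomputable def softQ (τ : ℝ) (π : ℕ → S → A → ℝ) (q : ℕ → S × A → ℝ) (j : ℕ) : S × A → ℝ :=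
  q j - τ • logPolicy (π j)

noncomputable def sumSoftQ (τ : ℝ) (π : ℕ → S → A → ℝ) (q : ℕ → S × A → ℝ) (j : ℕ) : S × A → ℝ :=
  ∑ i ∈ range j, softQ τ π q i

theorem sumSoftQ_succ (τ : ℝ) (π : ℕ → S → A → ℝ) (q : ℕ → S × A → ℝ) (j : ℕ) :
    sumSoftQ τ π q (j + 1) = sumSoftQ τ π q j + softQ τ π q j :=
  sum_range_succ _ _

variable [Fintype S] [Fintype A]

/- M-VI(1, τ) with errors `ε`, started from the uniform policy. -/
structure IsMVI (τ γ : ℝ) (r : S × A → ℝ) (P : Matrix (S × A) S ℝ) (ε : ℕ → S × A → ℝ)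
    (π : ℕ → S → A → ℝ) (q : ℕ → S × A → ℝ) : Prop where
  policy_zero : ∀ s a, π 0 s a = 1 / Fintype.card A
  policy_succ : ∀ j, π (j + 1) = softmax τ (q j)
  q_succ : ∀ j, q (j + 1) = r + τ • logPolicy (π (j + 1))
    + γ • P *ᵥ policyAvg (π (j + 1)) (q j - τ • logPolicy (π (j + 1))) + ε (j + 1)

namespace IsMVI

variable [Nonempty A] {τ γ : ℝ} {r : S × A → ℝ} {P : Matrix (S × A) S ℝ} {ε : ℕ → S × A → ℝ}
  {π : ℕ → S → A → ℝ} {q : ℕ → S × A → ℝ}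

theorem policy_eq_softmax (h : IsMVI τ γ r P ε π q) (hτ : τ ≠ 0) :
    ∀ j, π j = softmax τ (sumSoftQ τ π q j)
  | 0 => by ext s a; rw [h.policy_zero, sumSoftQ, sum_range_zero, softmax_zero]
  | j + 1 => by
    have hq : q j = fun x => sumSoftQ τ π q (j + 1) x - softValue τ (sumSoftQ τ π q j) x.1 := by
      ext ⟨s, a⟩
      have hlog := mul_log_softmax hτ s a (f := sumSoftQ τ π q j)
      rw [← h.policy_eq_softmax hτ j] at hlog
      simp only [sumSoftQ_succ, softQ, Pi.add_apply, Pi.sub_apply, Pi.smul_apply, logPolicy,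
        smul_eq_mul] at hlog ⊢
      linarith
    rw [h.policy_succ, hq, softmax_sub_comp_fst]

theorem policy_mem_stdSimplex (h : IsMVI τ γ r P ε π q) (hτ : τ ≠ 0) (j : ℕ) (s : S) :
    π j s ∈ stdSimplex ℝ A := by
  rw [h.policy_eq_softmax hτ]
  exact softmax_mem_stdSimplex s

theorem smul_logPolicy (h : IsMVI τ γ r P ε π q) (hτ : τ ≠ 0) (j : ℕ) :
    τ • logPolicy (π j) = sumSoftQ τ π q j - fun x => softValue τ (sumSoftQ τ π q j) x.1 := by
  ext ⟨s, a⟩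
  simp only [Pi.smul_apply, smul_eq_mul, logPolicy, h.policy_eq_softmax hτ, Pi.sub_apply]
  exact mul_log_softmax hτ s a

theorem softQ_succ (h : IsMVI τ γ r P ε π q) (hτ : τ ≠ 0) (j : ℕ) :
    softQ τ π q (j + 1) = r + γ • P *ᵥ
      (softValue τ (sumSoftQ τ π q (j + 1)) - softValue τ (sumSoftQ τ π q j)) + ε (j + 1) := by
  have hq : q j - τ • logPolicy (π (j + 1)) = fun x =>
      (softValue τ (sumSoftQ τ π q (j + 1)) - softValue τ (sumSoftQ τ π q j)) x.1 := by
    ext x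
    have hj := congrFun (h.smul_logPolicy hτ j) x
    have hj' := congrFun (h.smul_logPolicy hτ (j + 1)) x
    simp only [sumSoftQ_succ, softQ, Pi.sub_apply, Pi.add_apply] at hj hj' ⊢
    linarith
  rw [softQ, h.q_succ, hq, policyAvg_comp_fst (h.policy_mem_stdSimplex hτ (j + 1))]
  abel

theorem sumSoftQ_eq (h : IsMVI τ γ r P ε π q) (hτ : τ ≠ 0) (k : ℕ) :
    sumSoftQ τ π q k = softQ τ π q 0 - softQ τ π q k + (k : ℝ) • r
      + γ • P *ᵥ (softValue τ (sumSoftQ τ π q k) - fun _ => τ * Real.log (Fintype.card A))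
      + ∑ j ∈ Icc 1 k, ε j := by
  induction k with
  | zero =>
    have hV : softValue τ (0 : S × A → ℝ) = fun _ => τ * Real.log (Fintype.card A) :=
      funext softValue_zero
    simp [hV, sumSoftQ]
  | succ k ih =>
    have hstep := h.softQ_succ hτ k
    rw [mulVec_sub] at ih hstep ⊢
    rw [sum_Icc_succ_top (by omega)]
    push_cast
    linear_combination (norm := module) sumSoftQ_succ τ π q k + ih + hstep

theorem one_sub_smul_policyMatrix_mulVec_smul_sub_sumSoftQ [DecidableEq S] [DecidableEq A]
    (h : IsMVI τ γ r P ε π q) (hτ : τ ≠ 0) {p : S → A → ℝ} {qp : S × A → ℝ}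
    (hqp : qp = r + γ • P *ᵥ policyAvg p qp) (k : ℕ) :
    (1 - γ • policyMatrix P p) *ᵥ ((k : ℝ) • qp - sumSoftQ τ π q k)
      = -∑ j ∈ Icc 1 k, ε j + (softQ τ π q k - softQ τ π q 0) + γ • P *ᵥ
        (policyAvg p (sumSoftQ τ π q k) - softValue τ (sumSoftQ τ π q k)
          + fun _ => τ * Real.log (Fintype.card A)) := by
  have hsum := h.sumSoftQ_eq hτ k
  rw [mulVec_sub, mulVec_smul, one_sub_smul_policyMatrix_mulVec,
    one_sub_smul_policyMatrix_mulVec, sub_eq_of_eq_add hqp]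
  simp only [mulVec_sub, mulVec_add] at hsum ⊢
  linear_combination (norm := module) -hsum

theorem smul_sub_sumSoftQ_le [DecidableEq S] [DecidableEq A] (h : IsMVI τ γ r P ε π q)
    (hτ : 0 < τ) (hP : ∀ x, P x ∈ stdSimplex ℝ S) (hγ0 : 0 ≤ γ) (hγ1 : γ < 1)
    {p : S → A → ℝ} (hp : ∀ s, p s ∈ stdSimplex ℝ A) {qp : S × A → ℝ}
    (hqp : qp = r + γ • P *ᵥ policyAvg p qp) (k : ℕ) :
    (k : ℝ) • qp - sumSoftQ τ π q k ≤ (1 - γ • policyMatrix P p)⁻¹ *ᵥ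
      (-∑ j ∈ Icc 1 k, ε j + (softQ τ π q k - softQ τ π q 0
        + fun _ => τ * Real.log (Fintype.card A))) := by
  refine le_inv_one_sub_smul_mulVec (policyMatrix_mem_rowStochastic hP hp) hγ0 hγ1 ?_
  rw [h.one_sub_smul_policyMatrix_mulVec_smul_sub_sumSoftQ hτ.ne' hqp]
  set L := τ * Real.log (Fintype.card A)
  have hL : 0 ≤ L := mul_nonneg hτ.le (Real.log_natCast_nonneg _)
  have havg := policyAvg_le hp fun s a => le_softValue hτ s a (f := sumSoftQ τ π q k)
  intro x
  have hPx := dotProduct_le_of_mem_stdSimplex (hP x) (c := L)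
    (v := policyAvg p (sumSoftQ τ π q k) - softValue τ (sumSoftQ τ π q k) + fun _ => L)
    fun s => by simpa using havg s
  simp only [Pi.add_apply, Pi.sub_apply, Pi.smul_apply, smul_eq_mul, mulVec] at hPx ⊢
  nlinarith [mul_le_mul_of_nonneg_left hPx hγ0]

theorem inv_mulVec_le_smul_sub_sumSoftQ [DecidableEq S] [DecidableEq A] (h : IsMVI τ γ r P ε π q)
    (hτ : 0 < τ) (hP : ∀ x, P x ∈ stdSimplex ℝ S) (hγ0 : 0 ≤ γ) (hγ1 : γ < 1) {k : ℕ}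
    {qk : S × A → ℝ} (hqk : qk = r + γ • P *ᵥ policyAvg (π k) qk) :
    (1 - γ • policyMatrix P (π k))⁻¹ *ᵥ
      (-∑ j ∈ Icc 1 k, ε j + (softQ τ π q k - softQ τ π q 0))
      ≤ (k : ℝ) • qk - sumSoftQ τ π q k := by
  refine inv_one_sub_smul_mulVec_le
    (policyMatrix_mem_rowStochastic hP (h.policy_mem_stdSimplex hτ.ne' k)) hγ0 hγ1 ?_
  rw [h.one_sub_smul_policyMatrix_mulVec_smul_sub_sumSoftQ hτ.ne' hqk]
  refine le_add_of_nonneg_right (smul_nonneg hγ0 fun x => le_dotProduct_of_mem_stdSimplex (hP x)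
    fun s => ?_)
  have hent := softValue_le_policyAvg_softmax hτ s (f := sumSoftQ τ π q k)
  rw [← h.policy_eq_softmax hτ.ne'] at hent
  simp only [Pi.add_apply, Pi.sub_apply, Pi.zero_apply]
  linarith

theorem natCast_mul_sub_le [DecidableEq S] [DecidableEq A] (h : IsMVI τ γ r P ε π q) (hτ : 0 < τ)
    (hP : ∀ x, P x ∈ stdSimplex ℝ S) (hγ0 : 0 ≤ γ) (hγ1 : γ < 1) {p : S → A → ℝ}
    (hp : ∀ s, p s ∈ stdSimplex ℝ A) {qp qk : S × A → ℝ} {k : ℕ}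
    (hqp : qp = r + γ • P *ᵥ policyAvg p qp) (hqk : qk = r + γ • P *ᵥ policyAvg (π k) qk)
    {R : ℝ} (hR0 : ∀ x, |softQ τ π q 0 x| ≤ R) (hRk : ∀ x, |softQ τ π q k x| ≤ R) (x : S × A) :
    (k : ℝ) * (qp x - qk x)
      ≤ (((1 - γ • policyMatrix P p)⁻¹ - (1 - γ • policyMatrix P (π k))⁻¹) *ᵥ
          -∑ j ∈ Icc 1 k, ε j) x
        + (4 * R + τ * Real.log (Fintype.card A)) / (1 - γ) := by
  have hA := h.smul_sub_sumSoftQ_le hτ hP hγ0 hγ1 hp hqp k x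
  have hB := h.inv_mulVec_le_smul_sub_sumSoftQ hτ hP hγ0 hγ1 hqk x
  set L := τ * Real.log (Fintype.card A)
  set u := softQ τ π q k - softQ τ π q 0
  have hL : 0 ≤ L := mul_nonneg hτ.le (Real.log_natCast_nonneg _)
  have hu : ∀ y, |u y| ≤ 2 * R := fun y =>
    (abs_sub _ _).trans (by linarith [hRk y, hR0 y])
  have huL : ∀ y, |(u + fun _ => L : S × A → ℝ) y| ≤ 2 * R + L := fun y =>
    (abs_add_le _ _).trans (by rw [abs_of_nonneg hL]; linarith [hu y])
  have hbA := abs_le.mp <|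
    abs_inv_one_sub_smul_mulVec_le (policyMatrix_mem_rowStochastic hP hp) hγ0 hγ1 huL x
  have hbB := abs_le.mp <| abs_inv_one_sub_smul_mulVec_le
    (policyMatrix_mem_rowStochastic hP (h.policy_mem_stdSimplex hτ.ne' k)) hγ0 hγ1 hu x
  have hsum : (2 * R + L) / (1 - γ) + 2 * R / (1 - γ) = (4 * R + L) / (1 - γ) := by ring
  simp only [mulVec_add, sub_mulVec, Pi.add_apply, Pi.sub_apply, Pi.smul_apply,
    smul_eq_mul] at hA hB hbA ⊢
  linarith [hbA.1, hbB.1]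

theorem qfun_sub_le [DecidableEq S] [DecidableEq A] (h : IsMVI τ γ r P ε π q) (hτ : 0 < τ)
    (hP : ∀ x, P x ∈ stdSimplex ℝ S) (hγ0 : 0 ≤ γ) (hγ1 : γ < 1) {p : S → A → ℝ}
    (hp : ∀ s, p s ∈ stdSimplex ℝ A) {qp qk : S × A → ℝ} {k : ℕ} (hk : 0 < k)
    (hqp : qp = r + γ • P *ᵥ policyAvg p qp) (hqk : qk = r + γ • P *ᵥ policyAvg (π k) qk)
    {rmax : ℝ} (hR0 : ∀ x, |softQ τ π q 0 x| ≤ rmax / (1 - γ))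
    (hRk : ∀ x, |softQ τ π q k x| ≤ rmax / (1 - γ)) (x : S × A) :
    qp x - qk x
      ≤ |(((1 - γ • policyMatrix P p)⁻¹ - (1 - γ • policyMatrix P (π k))⁻¹) *ᵥ
          ((k : ℝ)⁻¹ • -∑ j ∈ Icc 1 k, ε j)) x|
        + 4 / (1 - γ) ^ 2 * ((rmax + τ * Real.log (Fintype.card A)) / k) := by
  set L := τ * Real.log (Fintype.card A)
  have hgap := h.natCast_mul_sub_le hτ hP hγ0 hγ1 hp hqp hqk hR0 hRk x
  have hconst : (4 * (rmax / (1 - γ)) + L) / (1 - γ) ≤ 4 / (1 - γ) ^ 2 * (rmax + L) := by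
    have h1γ : 0 < 1 - γ := sub_pos.mpr hγ1
    have hL : 0 ≤ L := mul_nonneg hτ.le (Real.log_natCast_nonneg _)
    rw [div_le_iff₀ h1γ]
    field_simp
    nlinarith
  have hk0 : (0 : ℝ) < k := Nat.cast_pos.mpr hk
  calc qp x - qk x
      ≤ ((((1 - γ • policyMatrix P p)⁻¹ - (1 - γ • policyMatrix P (π k))⁻¹) *ᵥ
          -∑ j ∈ Icc 1 k, ε j) x + 4 / (1 - γ) ^ 2 * (rmax + L)) / k := by
        rw [le_div_iff₀' hk0]
        linarith
    _ ≤ _ := by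
        rw [mulVec_smul, Pi.smul_apply, smul_eq_mul, inv_mul_eq_div, add_div, mul_div_assoc]
        gcongr
        exact le_abs_self _

end IsMVI

end MVI

end MDP

open MDP

theorem stmt_15_general {S A : Type*} [Fintype S] [Fintype A] [Nonempty A]
    [DecidableEq S] [DecidableEq A]
    (r : S × A → ℝ) (rmax : ℝ)
    (γ : ℝ) (hγ : γ ∈ Set.Ioo (0 : ℝ) 1)
    (P : S × A → S → ℝ) (hP0 : ∀ sa s', 0 ≤ P sa s') (hP1 : ∀ sa, ∑ s', P sa s' = 1)
    (τ : ℝ) (hτ : 0 < τ) (k : ℕ) (hk : 1 ≤ k)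
    (π : ℕ → S → A → ℝ) (q : ℕ → S × A → ℝ) (ε : ℕ → S × A → ℝ)
    (hπ0 : ∀ s a, π 0 s a = 1 / (Fintype.card A : ℝ))
    (hπ : ∀ j s a, π (j + 1) s a
      = Real.exp (q j (s, a) / τ) / ∑ a', Real.exp (q j (s, a') / τ))
    (hq : ∀ j s a, q (j + 1) (s, a)
      = r (s, a) + 1 * τ * Real.log (π (j + 1) s a)
        + γ * ∑ s', P (s, a) s' *
            (∑ a', π (j + 1) s' a' * (q j (s', a') - τ * Real.log (π (j + 1) s' a')))
        + ε (j + 1) (s, a))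
    (hq0 : ∀ s a, |q 0 (s, a) - τ * Real.log (π 0 s a)| ≤ rmax / (1 - γ))
    (hbd : ∀ j, 1 ≤ j → j ≤ k →
      ∀ s a, |q j (s, a) - τ * Real.log (π j s a)| ≤ rmax / (1 - γ))
    (qstar : S × A → ℝ)
    (hqstar : ∀ s a, qstar (s, a)
      = r (s, a) + γ * ∑ s', P (s, a) s' *
          (Finset.univ.sup' Finset.univ_nonempty fun a' => qstar (s', a')))
    (πstar : S → A → ℝ)
    (hπstar : ∀ s, ∃ a, (∀ a', qstar (s, a') ≤ qstar (s, a)) ∧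
      ∀ a', πstar s a' = if a' = a then 1 else 0)
    (qπk : S × A → ℝ)
    (hqπk : ∀ s a, qπk (s, a)
      = r (s, a) + γ * ∑ s', P (s, a) s' * (∑ a', π k s' a' * qπk (s', a'))) :
    let Ppol : (S → A → ℝ) → Matrix (S × A) (S × A) ℝ :=
      fun p x y => P x y.1 * p y.1 y.2
    let A1 : Matrix (S × A) (S × A) ℝ :=
      (1 - γ • Ppol πstar)⁻¹ - (1 - γ • Ppol (π k))⁻¹
    let E : S × A → ℝ := fun x => -(∑ j ∈ Finset.Icc 1 k, ε j x)
    ∀ x : S × A,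
      0 ≤ qstar x - qπk x ∧
      qstar x - qπk x
        ≤ |A1.mulVec (fun y => E y / (k : ℝ)) x|
          + 4 / (1 - γ) ^ 2 * ((rmax + τ * Real.log (Fintype.card A)) / (k : ℝ)) := by
  intro Ppol A1 E x
  obtain ⟨hγ0, hγ1⟩ := hγ
  have hPS : ∀ x, P x ∈ stdSimplex ℝ S := fun x => ⟨hP0 x, hP1 x⟩
  have hmvi : IsMVI τ γ r P ε π q := by
    refine ⟨hπ0, fun j => funext₂ (hπ j), fun j => ?_⟩
    ext ⟨s, a⟩
    simp [hq, logPolicy, policyAvg, mulVec, dotProduct]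
  choose astar hmax hπstar using hπstar
  have hπstar_single : ∀ s, πstar s = Pi.single (astar s) 1 := fun s =>
    funext fun a => by rw [hπstar, Pi.single_apply]
  have hvstar := policyAvg_single_eq_sup' hπstar_single hmax
  have hqstar' : qstar = r + γ • P *ᵥ policyAvg πstar qstar := by
    ext ⟨s, a⟩
    simp [hqstar s a, hvstar, mulVec, dotProduct]
  have hqπk' : qπk = r + γ • P *ᵥ policyAvg (π k) qπk := funext fun x => hqπk x.1 x.2
  have hE : (fun y => E y / (k : ℝ)) = (k : ℝ)⁻¹ • -∑ j ∈ Icc 1 k, ε j := by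
    ext y
    simp [E, Finset.sum_apply, div_eq_inv_mul]
  refine ⟨sub_nonneg.mpr (qfun_le_of_le_bellman_max hPS hγ0.le hγ1
    (hmvi.policy_mem_stdSimplex hτ.ne' k) hqπk' hqstar'
    (fun s a => hvstar s ▸ le_sup' (fun a' => qstar (s, a')) (mem_univ a)) x), ?_⟩
  rw [hE]
  exact hmvi.qfun_sub_le hτ hPS hγ0.le hγ1
    (fun s => hπstar_single s ▸ single_mem_stdSimplex ℝ (astar s)) hk hqstar' hqπk'
    (fun y => hq0 y.1 y.2) (fun y => hbd k hk le_rfl y.1 y.2) x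

/-- Corollary 1 (componentwise bound for M-VI(1,τ)): started from the uniform policy, with
`‖q_j − τ ln π_j‖∞ ≤ r_max/(1−γ)` for `0 ≤ j ≤ k`, writing `E_k = −∑_{j=1}^k ε_j` and
`A¹_k = (I − γP_{π_*})⁻¹ − (I − γP_{π_k})⁻¹`, one has, componentwise on `S×A`,
`0 ≤ q_* − q_{π_k} ≤ |A¹_k (E_k/k)| + (4/(1−γ)²)((r_max + τ ln|A|)/k) 𝟏`. -/
theorem stmt_15 {S A : Type*} [Fintype S] [Fintype A] [Nonempty S] [Nonempty A]
    [DecidableEq S] [DecidableEq A]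
    (r : S × A → ℝ) (rmax : ℝ) (hr : ∀ sa, |r sa| ≤ rmax)
    (γ : ℝ) (hγ : γ ∈ Set.Ioo (0 : ℝ) 1)
    (P : S × A → S → ℝ) (hP0 : ∀ sa s', 0 ≤ P sa s') (hP1 : ∀ sa, ∑ s', P sa s' = 1)
    (τ : ℝ) (hτ : 0 < τ) (k : ℕ) (hk : 1 ≤ k)
    (π : ℕ → S → A → ℝ) (q : ℕ → S × A → ℝ) (ε : ℕ → S × A → ℝ)
    (hπ0 : ∀ s a, π 0 s a = 1 / (Fintype.card A : ℝ))
    (hπ : ∀ j s a, π (j + 1) s a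
      = Real.exp (q j (s, a) / τ) / ∑ a', Real.exp (q j (s, a') / τ))
    (hq : ∀ j s a, q (j + 1) (s, a)
      = r (s, a) + 1 * τ * Real.log (π (j + 1) s a)
        + γ * ∑ s', P (s, a) s' *
            (∑ a', π (j + 1) s' a' * (q j (s', a') - τ * Real.log (π (j + 1) s' a')))
        + ε (j + 1) (s, a))
    (hq0 : ∀ s a, |q 0 (s, a) - τ * Real.log (π 0 s a)| ≤ rmax / (1 - γ))
    (hbd : ∀ j, 1 ≤ j → j ≤ k →
      ∀ s a, |q j (s, a) - τ * Real.log (π j s a)| ≤ rmax / (1 - γ))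
    (qstar : S × A → ℝ)
    (hqstar : ∀ s a, qstar (s, a)
      = r (s, a) + γ * ∑ s', P (s, a) s' *
          (Finset.univ.sup' Finset.univ_nonempty fun a' => qstar (s', a')))
    (πstar : S → A → ℝ)
    (hπstar : ∀ s, ∃ a, (∀ a', qstar (s, a') ≤ qstar (s, a)) ∧
      ∀ a', πstar s a' = if a' = a then 1 else 0)
    (qπk : S × A → ℝ)
    (hqπk : ∀ s a, qπk (s, a)
      = r (s, a) + γ * ∑ s', P (s, a) s' * (∑ a', π k s' a' * qπk (s', a'))) :
    let Ppol : (S → A → ℝ) → Matrix (S × A) (S × A) ℝ :=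
      fun p x y => P x y.1 * p y.1 y.2
    let A1 : Matrix (S × A) (S × A) ℝ :=
      (1 - γ • Ppol πstar)⁻¹ - (1 - γ • Ppol (π k))⁻¹
    let E : S × A → ℝ := fun x => -(∑ j ∈ Finset.Icc 1 k, ε j x)
    ∀ x : S × A,
      0 ≤ qstar x - qπk x ∧
      qstar x - qπk x
        ≤ |A1.mulVec (fun y => E y / (k : ℝ)) x|
          + 4 / (1 - γ) ^ 2 * ((rmax + τ * Real.log (Fintype.card A)) / (k : ℝ)) :=
  stmt_15_general r rmax γ hγ P hP0 hP1 τ hτ k hk π q ε hπ0 hπ hq hq0 hbd qstar hqstar πstar hπstar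
    qπk hqπk
end
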